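/- Let n ≥ 1 and let s be a sign assignment on the n-dimensional cube. For 0 ≤ k ≤ n, let C^k be the free abelian group on the set {u ∈ {0,1}^n : |u| = k}, and define δ_k : C^k → C^{k+1} on generators by δ_k(v) = ∑_{u : u ≥ v, |u| = |v|+1} (−1)^{s_{u,v}} · u. Then δ_{k+1} ∘ δ_k = 0 for all k, and the resulting cube cochain complex is acyclic: δ_0 is injective, δ_{n−1} is surjective, and kernel(δ_k) = image(δ_{k−1}) for every 1 ≤ k ≤ n−1. -/
import Mathlib

private lemma sign_cancel (a b c d : ZMod 2) (h : (a+b)+(c+d) = 1) :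
    (-1:ℤ)^a.val * (-1:ℤ)^b.val + (-1:ℤ)^c.val * (-1:ℤ)^d.val = 0 := by
  revert a b c d; decide

private lemma sign_sq (a : ZMod 2) : (-1:ℤ)^a.val * (-1:ℤ)^a.val = 1 := by
  revert a; decide



/-- A sign assignment on the `n`-dimensional cube (vertices are subsets of `Fin n`,
`u ≥ v` iff `v ⊆ u`, and `|u|` is the cardinality): a function `s` on edges
(pairs `v ⊆ u` with `|u| = |v| + 1`) valued in `ℤ/2` such that for every `u > w`
with `|u| - |w| = 2` and the two intermediate vertices `v ≠ v'`,
`(s u v + s v w) + (s u v' + s v' w) = 1`. -/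
def IsSignAssignment (n : ℕ) (s : Finset (Fin n) → Finset (Fin n) → ZMod 2) : Prop :=
  ∀ u w : Finset (Fin n), w ⊆ u → u.card = w.card + 2 →
    ∀ v v' : Finset (Fin n),
      w ⊆ v → v ⊆ u → v.card = w.card + 1 →
      w ⊆ v' → v' ⊆ u → v'.card = w.card + 1 →
      v ≠ v' →
      (s u v + s v w) + (s u v' + s v' w) = 1

/-- The cube cochain complex associated to a sign assignment `s` on the
`n`-dimensional cube: `C^k` is the free abelian group on the vertices of weight `k`,
and `δ_k v = ∑_{u ⊇ v, |u| = |v| + 1} (-1)^{s_{u,v}} u`.  Then `δ ∘ δ = 0` and the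
complex is acyclic: `δ_0` is injective, `δ_{n-1}` is surjective, and
`ker δ_{j+1} = im δ_j` for `j + 1 ≤ n - 1`. -/
theorem statement10 (n : ℕ) (hn : 1 ≤ n)
    (s : Finset (Fin n) → Finset (Fin n) → ZMod 2) (hs : IsSignAssignment n s)
    (δ : ∀ k : ℕ, ({u : Finset (Fin n) // u.card = k} →₀ ℤ) →ₗ[ℤ]
        ({u : Finset (Fin n) // u.card = k + 1} →₀ ℤ))
    (hδ : ∀ (k : ℕ) (v : {u : Finset (Fin n) // u.card = k}),
      δ k (Finsupp.single v 1) =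
        ∑ u ∈ Finset.univ.filter
            (fun u : {u : Finset (Fin n) // u.card = k + 1} => v.1 ⊆ u.1),
          Finsupp.single u ((-1 : ℤ) ^ (s u.1 v.1).val)) :
    (∀ k : ℕ, (δ (k + 1)).comp (δ k) = 0) ∧
    Function.Injective (δ 0) ∧
    Function.Surjective (δ (n - 1)) ∧
    (∀ j : ℕ, j + 1 ≤ n - 1 → LinearMap.ker (δ (j + 1)) = LinearMap.range (δ j)) := by
  classical
  have hi0 : 0 < n := hn
  let i0 : Fin n := ⟨0, hi0⟩
  have herase : ∀ (k : ℕ) (u : {u : Finset (Fin n) // u.card = k + 1}), i0 ∈ u.1 →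
      (u.1.erase i0).card = k := by
    intro k u h
    rw [Finset.card_erase_of_mem h, u.2]; omega
  let hv : ∀ k : ℕ, {u : Finset (Fin n) // u.card = k + 1} →
      ({u : Finset (Fin n) // u.card = k} →₀ ℤ) := fun k u =>
    if h : i0 ∈ u.1 then
      Finsupp.single ⟨u.1.erase i0, herase k u h⟩ ((-1 : ℤ) ^ (s u.1 (u.1.erase i0)).val)
    else 0
  let H : ∀ k : ℕ, ({u : Finset (Fin n) // u.card = k + 1} →₀ ℤ) →ₗ[ℤ]
      ({u : Finset (Fin n) // u.card = k} →₀ ℤ) := fun k =>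
    Finsupp.lsum ℤ (fun u => LinearMap.id.smulRight (hv k u))
  -- pointwise formula for δ
  have hδapp : ∀ (k : ℕ) (v : {u : Finset (Fin n) // u.card = k})
      (U : {u : Finset (Fin n) // u.card = k + 1}),
      (δ k (Finsupp.single v 1)) U
        = if v.1 ⊆ U.1 then (-1:ℤ)^(s U.1 v.1).val else 0 := by
    intro k v U
    rw [hδ, Finsupp.finset_sum_apply]
    simp only [Finsupp.single_apply]
    rw [Finset.sum_ite_eq' _ U (fun u => (-1:ℤ)^(s u.1 v.1).val)]
    simp
  have hHsingle : ∀ (k : ℕ) (u : {u : Finset (Fin n) // u.card = k + 1}) (c : ℤ),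
      H k (Finsupp.single u c) = c • hv k u := by
    intro k u c
    simp [H, Finsupp.lsum_single]
  have hvapp : ∀ (k : ℕ) (u' : {u : Finset (Fin n) // u.card = k + 1})
      (U : {u : Finset (Fin n) // u.card = k}),
      (hv k u') U = if i0 ∈ u'.1 ∧ u'.1.erase i0 = U.1 then
        (-1:ℤ)^(s u'.1 (u'.1.erase i0)).val else 0 := by
    intro k u' U
    by_cases h : i0 ∈ u'.1
    · simp only [hv, dif_pos h, Finsupp.single_apply]
      by_cases h2 : u'.1.erase i0 = U.1
      · rw [if_pos (Subtype.ext h2), if_pos ⟨h, h2⟩]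
      · rw [if_neg (fun hh => h2 (congrArg Subtype.val hh)), if_neg (by tauto)]
    · simp [hv, h]
  -- closed form for H k (δ k (single u 1)) at U
  have hterm2 : ∀ (k : ℕ) (u U : {u : Finset (Fin n) // u.card = k}),
      (H k (δ k (Finsupp.single u 1))) U =
        if i0 ∉ U.1 ∧ u.1 ⊆ insert i0 U.1 then
          (-1:ℤ)^(s (insert i0 U.1) u.1).val * (-1:ℤ)^(s (insert i0 U.1) (U.1 : Finset (Fin n))).val
        else 0 := by
    intro k u U
    rw [hδ k u, map_sum, Finsupp.finset_sum_apply]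
    have hsummand : ∀ (U' : {u : Finset (Fin n) // u.card = k + 1}),
        (H k (Finsupp.single U' ((-1:ℤ)^(s U'.1 u.1).val))) U
          = (-1:ℤ)^(s U'.1 u.1).val * ((hv k U') U) := by
      intro U'
      rw [hHsingle, Finsupp.smul_apply, smul_eq_mul]
    simp only [hsummand, hvapp]
    by_cases hU : i0 ∈ U.1
    · rw [if_neg (by tauto)]
      apply Finset.sum_eq_zero
      intro U' _
      rw [if_neg, mul_zero]
      rintro ⟨h1, h2⟩
      exact Finset.notMem_erase i0 U'.1 (h2 ▸ hU)
    · by_cases hsub : u.1 ⊆ insert i0 U.1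
      · have hcard : (insert i0 U.1).card = k + 1 := by
          rw [Finset.card_insert_of_notMem hU, U.2]
        rw [Finset.sum_eq_single (⟨insert i0 U.1, hcard⟩ : {u : Finset (Fin n) // u.card = k + 1})]
        · have h1 : i0 ∈ insert i0 U.1 := Finset.mem_insert_self _ _
          have h2 : (insert i0 U.1).erase i0 = U.1 := Finset.erase_insert hU
          rw [if_pos ⟨h1, h2⟩, if_pos ⟨hU, hsub⟩, h2]
        · intro U' _ hne
          rw [if_neg, mul_zero]
          rintro ⟨h1, h2⟩
          exact hne (Subtype.ext (by rw [← Finset.insert_erase h1, h2]))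
        · intro hb
          exact absurd (Finset.mem_filter.mpr ⟨Finset.mem_univ (⟨insert i0 U.1, hcard⟩ : {u : Finset (Fin n) // u.card = k + 1}), hsub⟩) hb
      · rw [if_neg (by tauto)]
        apply Finset.sum_eq_zero
        intro U' hU'
        rw [if_neg, mul_zero]
        rintro ⟨h1, h2⟩
        apply hsub
        have hUe : U'.1 = insert i0 U.1 := by rw [← Finset.insert_erase h1, h2]
        exact hUe ▸ (Finset.mem_filter.mp hU').2
  -- closed form for δ k (H k (single u 1)) at U
  have hterm1 : ∀ (k : ℕ) (u U : {u : Finset (Fin n) // u.card = k + 1}),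
      (δ k (H k (Finsupp.single u 1))) U =
        if i0 ∈ u.1 ∧ u.1.erase i0 ⊆ U.1 then
          (-1:ℤ)^(s u.1 (u.1.erase i0)).val * (-1:ℤ)^(s U.1 (u.1.erase i0)).val
        else 0 := by
    intro k u U
    rw [hHsingle, one_smul]
    by_cases h : i0 ∈ u.1
    · have : hv k u = ((-1:ℤ)^(s u.1 (u.1.erase i0)).val) •
          Finsupp.single (⟨u.1.erase i0, herase k u h⟩ : {u : Finset (Fin n) // u.card = k}) 1 := by
        simp only [hv, dif_pos h, Finsupp.smul_single, smul_eq_mul, mul_one]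
      rw [this, map_smul, Finsupp.smul_apply, hδapp, smul_eq_mul]
      by_cases h2 : u.1.erase i0 ⊆ U.1
      · rw [if_pos h2, if_pos ⟨h, h2⟩]
      · rw [if_neg h2, if_neg (by tauto), mul_zero]
    · simp only [hv, dif_neg h, map_zero, Finsupp.coe_zero, Pi.zero_apply]
      rw [if_neg (by tauto)]
  -- pointwise homotopy identity
  have hkey : ∀ (k : ℕ) (u U : {u : Finset (Fin n) // u.card = k + 1}),
      (δ k (H k (Finsupp.single u 1))) U + (H (k+1) (δ (k+1) (Finsupp.single u 1))) U
        = (Finsupp.single u (1:ℤ)) U := by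
    intro k u U
    rw [hterm1, hterm2, Finsupp.single_apply]
    by_cases hu : i0 ∈ u.1
    · by_cases hU : i0 ∈ U.1
      · have hc2 : ¬ (i0 ∉ U.1 ∧ u.1 ⊆ insert i0 U.1) := by tauto
        rw [if_neg hc2, add_zero]
        by_cases hsub : u.1.erase i0 ⊆ U.1
        · have hsubU : u.1 ⊆ U.1 := by
            intro x hx
            by_cases hxi : x = i0
            · exact hxi ▸ hU
            · exact hsub (Finset.mem_erase.mpr ⟨hxi, hx⟩)
          have hequ : u = U := Subtype.ext
            (Finset.eq_of_subset_of_card_le hsubU (by rw [u.2, U.2]))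
          subst hequ
          rw [if_pos ⟨hu, hsub⟩, if_pos rfl, sign_sq]
        · rw [if_neg (by tauto), if_neg]
          intro hequ
          exact hsub (hequ ▸ Finset.erase_subset i0 u.1)
      · have hne : u ≠ U := fun h => hU (h ▸ hu)
        rw [if_neg hne]
        by_cases hsub : u.1.erase i0 ⊆ U.1
        · have hsub' : u.1 ⊆ insert i0 U.1 := by
            intro x hx
            by_cases hxi : x = i0
            · exact hxi ▸ Finset.mem_insert_self _ _
            · exact Finset.mem_insert_of_mem (hsub (Finset.mem_erase.mpr ⟨hxi, hx⟩))
          rw [if_pos ⟨hu, hsub⟩, if_pos ⟨hU, hsub'⟩]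
          -- square cancellation
          have hwcard : (u.1.erase i0).card = k := herase k u hu
          have hWcard : (insert i0 U.1).card = k + 2 := by
            rw [Finset.card_insert_of_notMem hU, U.2]
          have hwsub : u.1.erase i0 ⊆ insert i0 U.1 :=
            (Finset.erase_subset i0 u.1).trans hsub'
          have hne' : u.1 ≠ U.1 := fun h => hne (Subtype.ext h)
          have hsq := hs (insert i0 U.1) (u.1.erase i0) hwsub
            (by rw [hWcard, hwcard]) u.1 U.1
            (Finset.erase_subset i0 u.1) hsub' (by rw [u.2, hwcard])
            hsub (Finset.subset_insert _ _) (by rw [U.2, hwcard]) hne'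
          exact sign_cancel _ _ _ _ (by linear_combination hsq)
        · have hsub' : ¬ u.1 ⊆ insert i0 U.1 := by
            intro h
            apply hsub
            intro x hx
            rcases Finset.mem_insert.mp (h (Finset.mem_of_mem_erase hx)) with h' | h'
            · exact absurd h' (Finset.ne_of_mem_erase hx)
            · exact h'
          rw [if_neg (by tauto), if_neg (by tauto), add_zero]
    · rw [if_neg (by tauto), zero_add]
      by_cases hU : i0 ∈ U.1
      · have hne : u ≠ U := fun h => hu (h ▸ hU)
        rw [if_neg (by tauto), if_neg hne]
      · by_cases hequ : u = U
        · subst hequ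
          rw [if_pos ⟨hU, Finset.subset_insert _ _⟩, if_pos rfl, sign_sq]
        · rw [if_neg, if_neg hequ]
          rintro ⟨h1, h2⟩
          apply hequ
          apply Subtype.ext
          have hsubU : u.1 ⊆ U.1 := fun x hx =>
            (Finset.mem_insert.mp (h2 hx)).resolve_left (fun he => hu (he ▸ hx))
          exact Finset.eq_of_subset_of_card_le hsubU (by rw [u.2, U.2])
  -- homotopy identity as linear maps
  have hhomot : ∀ k : ℕ, (δ k).comp (H k) + (H (k+1)).comp (δ (k+1)) = LinearMap.id := by
    intro k
    apply Finsupp.lhom_ext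
    intro u b
    have hb : (Finsupp.single u b : {u : Finset (Fin n) // u.card = k + 1} →₀ ℤ)
        = b • Finsupp.single u 1 := by
      rw [Finsupp.smul_single, smul_eq_mul, mul_one]
    rw [hb, map_smul, map_smul]
    congr 1
    ext U
    simp only [LinearMap.add_apply, LinearMap.comp_apply, Finsupp.add_apply, LinearMap.id_apply]
    exact hkey k u U
  -- δ ∘ δ = 0
  have hδδ : ∀ k : ℕ, (δ (k + 1)).comp (δ k) = 0 := by
    intro k
    apply Finsupp.lhom_ext
    intro v b
    have hb : (Finsupp.single v b : {u : Finset (Fin n) // u.card = k} →₀ ℤ)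
        = b • Finsupp.single v 1 := by
      rw [Finsupp.smul_single, smul_eq_mul, mul_one]
    rw [hb, map_smul, map_smul, LinearMap.zero_apply, smul_zero]
    have hz : ((δ (k + 1)).comp (δ k)) (Finsupp.single v 1) = 0 := by
      ext W
      rw [LinearMap.comp_apply, hδ k v, map_sum, Finsupp.finset_sum_apply]
      have hsummand : ∀ (u : {u : Finset (Fin n) // u.card = k + 1}),
          (δ (k+1) (Finsupp.single u ((-1:ℤ)^(s u.1 v.1).val))) W
            = if u.1 ⊆ W.1 then (-1:ℤ)^(s u.1 v.1).val * (-1:ℤ)^(s W.1 u.1).val else 0 := by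
        intro u
        have : (Finsupp.single u ((-1:ℤ)^(s u.1 v.1).val))
            = ((-1:ℤ)^(s u.1 v.1).val) • Finsupp.single u 1 := by
          rw [Finsupp.smul_single, smul_eq_mul, mul_one]
        rw [this, map_smul, Finsupp.smul_apply, hδapp, smul_eq_mul, mul_ite, mul_zero]
      simp only [hsummand]
      rw [Finset.sum_ite, Finset.sum_const_zero, add_zero]
      set S := (Finset.univ.filter
        (fun u : {u : Finset (Fin n) // u.card = k + 1} => v.1 ⊆ u.1)).filter
        (fun u => u.1 ⊆ W.1) with hSdef
      show (∑ u ∈ S, (-1:ℤ)^(s u.1 v.1).val * (-1:ℤ)^(s W.1 u.1).val) = 0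
      by_cases hvw : v.1 ⊆ W.1
      · have hd : (W.1 \ v.1).card = 2 := by
          rw [Finset.card_sdiff_of_subset hvw, W.2, v.2]; omega
        obtain ⟨i, j, hij, hT⟩ := Finset.card_eq_two.mp hd
        have hiW : i ∈ W.1 ∧ i ∉ v.1 := Finset.mem_sdiff.mp
          (hT ▸ Finset.mem_insert_self i {j})
        have hjW : j ∈ W.1 ∧ j ∉ v.1 := Finset.mem_sdiff.mp
          (hT ▸ Finset.mem_insert_of_mem (Finset.mem_singleton_self j))
        have hca : (insert i v.1).card = k + 1 := by
          rw [Finset.card_insert_of_notMem hiW.2, v.2]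
        have hcb : (insert j v.1).card = k + 1 := by
          rw [Finset.card_insert_of_notMem hjW.2, v.2]
        set a : {u : Finset (Fin n) // u.card = k + 1} := ⟨insert i v.1, hca⟩ with ha
        set b' : {u : Finset (Fin n) // u.card = k + 1} := ⟨insert j v.1, hcb⟩ with hb'
        have habs : a.1 ≠ b'.1 := by
          show insert i v.1 ≠ insert j v.1
          intro h
          apply hij
          have : i ∈ insert j v.1 := h ▸ Finset.mem_insert_self i v.1
          rcases Finset.mem_insert.mp this with h' | h'
          · exact h'
          · exact absurd h' hiW.2
        have hab : a ≠ b' := fun h => habs (congrArg Subtype.val h)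
        have hS : S = {a, b'} := by
          ext x
          simp only [hSdef, Finset.mem_filter, Finset.mem_univ, true_and,
            Finset.mem_insert, Finset.mem_singleton]
          constructor
          · rintro ⟨h1, h2⟩
            have hc : (x.1 \ v.1).card = 1 := by
              rw [Finset.card_sdiff_of_subset h1, x.2, v.2]; omega
            obtain ⟨y, hy⟩ := Finset.card_eq_one.mp hc
            have hym : y ∈ x.1 \ v.1 := hy ▸ Finset.mem_singleton_self y
            have hyW : y ∈ W.1 \ v.1 := Finset.mem_sdiff.mpr
              ⟨h2 (Finset.mem_sdiff.mp hym).1, (Finset.mem_sdiff.mp hym).2⟩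
            have hx : x.1 = insert y v.1 := by
              rw [← Finset.sdiff_union_of_subset h1, hy, ← Finset.insert_eq]
            rw [hT] at hyW
            rcases Finset.mem_insert.mp hyW with h' | h'
            · left; exact Subtype.ext (by rw [hx, h'])
            · right; exact Subtype.ext (by rw [hx, Finset.mem_singleton.mp h'])
          · rintro (rfl | rfl)
            · exact ⟨Finset.subset_insert _ _, Finset.insert_subset hiW.1 hvw⟩
            · exact ⟨Finset.subset_insert _ _, Finset.insert_subset hjW.1 hvw⟩
        rw [hS, Finset.sum_insert (by simp [hab]), Finset.sum_singleton]
        have hsq := hs W.1 v.1 hvw (by rw [W.2, v.2]) a.1 b'.1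
          (Finset.subset_insert _ _) (Finset.insert_subset hiW.1 hvw) (by rw [hca, v.2])
          (Finset.subset_insert _ _) (Finset.insert_subset hjW.1 hvw) (by rw [hcb, v.2])
          habs
        exact sign_cancel _ _ _ _ (by linear_combination hsq)
      · have hSempty : S = ∅ := by
          ext x
          simp only [hSdef, Finset.mem_filter, Finset.mem_univ, true_and,
            Finset.notMem_empty, iff_false, not_and]
          intro h1 h2
          exact hvw (h1.trans h2)
        rw [hSempty, Finset.sum_empty]
    rw [hz, smul_zero]
  -- H 0 ∘ δ 0 = id
  have hcomp0 : (H 0).comp (δ 0) = LinearMap.id := by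
    apply Finsupp.lhom_ext
    intro u b
    have hb : (Finsupp.single u b : {u : Finset (Fin n) // u.card = 0} →₀ ℤ)
        = b • Finsupp.single u 1 := by
      rw [Finsupp.smul_single, smul_eq_mul, mul_one]
    rw [hb, map_smul, map_smul]
    congr 1
    ext U
    rw [LinearMap.comp_apply, LinearMap.id_apply, hterm2 0 u U, Finsupp.single_apply]
    have hu : u.1 = ∅ := Finset.card_eq_zero.mp u.2
    have hU : U.1 = ∅ := Finset.card_eq_zero.mp U.2
    have hequ : u = U := Subtype.ext (hu.trans hU.symm)
    subst hequ
    rw [if_pos ⟨by simp [hU], Finset.subset_insert _ _⟩, if_pos rfl]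
    exact sign_sq _
  refine ⟨hδδ, ?_, ?_, ?_⟩
  · -- injectivity of δ 0
    intro x y h
    have hx := LinearMap.congr_fun hcomp0 x
    have hy := LinearMap.congr_fun hcomp0 y
    simp only [LinearMap.comp_apply, LinearMap.id_apply] at hx hy
    rw [← hx, ← hy, h]
  · -- surjectivity of δ (n-1)
    intro y
    refine ⟨H (n-1) y, ?_⟩
    have h1 := LinearMap.congr_fun (hhomot (n-1)) y
    simp only [LinearMap.add_apply, LinearMap.comp_apply, LinearMap.id_apply] at h1
    have h0 : δ (n - 1 + 1) y = 0 := by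
      ext a
      exfalso
      have hle := Finset.card_le_univ a.1
      rw [a.2] at hle
      simp [Finset.card_univ, Fintype.card_fin] at hle
      omega
    rw [h0, map_zero, add_zero] at h1
    exact h1
  · -- ker = range
    intro j _
    ext x
    simp only [LinearMap.mem_ker, LinearMap.mem_range]
    constructor
    · intro hx
      have h1 := LinearMap.congr_fun (hhomot j) x
      simp only [LinearMap.add_apply, LinearMap.comp_apply, LinearMap.id_apply] at h1
      rw [hx, map_zero, add_zero] at h1
      exact ⟨H j x, h1⟩
    · rintro ⟨y, rfl⟩
      have h2 := LinearMap.congr_fun (hδδ j) y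
      simpa using h2
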